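/- arXiv:2411.02001 — 2 statements merged into one kernel-verified Lean document; each statement's English description precedes it below -/
import Mathlib

section
/- (Self-consistency of the last-layer error) Combining $\gamma_{L-1}e_{L-1}^* = \gamma_L W_L^\top e_L^*$ and the telescoping $v_{L-1}^* - W_{L-1:1}x = \sum_{l=1}^{L-1} W_{L-1:l+1} e_l^*$ (with $W_{L-1:L} = I$), one obtains $v_{L-1}^* - W_{L-1:1}x = \gamma_L\left(\sum_{i=2}^{L}\frac{1}{\gamma_{i-1}} W_{L-1:i}W_{L:i}^\top\right) e_L^*$, and hence $(I + C_\gamma)e_L^* = y - W_{L:1}x$, where $C_\gamma = \sum_{i=2}^L \frac{\gamma_L}{\gamma_{i-1}}W_{L:i}W_{L:i}^\top$. -/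
open Matrix Finset

/-
Unrolling `v_l = W_l v_{l-1} + e_l` from `v_0 = x` telescopes `v_{L-1} - W_{L-1:1} x` into
`∑_l W_{L-1:l+1} e_l`, while the critical-point relations, read from the top layer down, express
every error through the last one: `e_l = (γ_L / γ_l) W_{L:l+1}ᵀ e_L`. Substituting the second into
the first gives `v_{L-1}` as `W_{L-1:1} x` plus a linear function of `e_L`; feeding this into
`e_L = y - W_L v_{L-1}` and absorbing `W_L` into the chains (`W_L W_{L-1:i} = W_{L:i}`) yields the
linear equation `(I + C_γ) e_L = y - W_{L:1} x`.
-/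

/-- The matrix chain `W_{j:i} = W j * W (j-1) * ⋯ * W i` (identity when `i > j`). -/
noncomputable def Wch {d : ℕ} (W : ℕ → Matrix (Fin d) (Fin d) ℝ) (i j : ℕ) :
    Matrix (Fin d) (Fin d) ℝ :=
  ((List.range (j + 1 - i)).map fun k => W (j - k)).prod

section Wch

variable {d : ℕ} (W : ℕ → Matrix (Fin d) (Fin d) ℝ)

lemma Wch_eq_one_of_lt {i j : ℕ} (h : j < i) : Wch W i j = 1 := by
  simp [Wch, Nat.sub_eq_zero_of_le h]

lemma Wch_succ_right {i j : ℕ} (h : i ≤ j + 1) : Wch W i (j + 1) = W (j + 1) * Wch W i j := by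
  rw [Wch, Wch, show j + 1 + 1 - i = j + 1 - i + 1 by omega, List.range_succ_eq_map]
  simp only [List.map_cons, List.map_map, List.prod_cons, Nat.sub_zero]
  congr 3
  funext k
  simp

lemma Wch_eq_Wch_succ_left_mul {i j : ℕ} (h : i ≤ j) : Wch W i j = Wch W (i + 1) j * W i := by
  rw [Wch, Wch, show j + 1 - i = j + 1 - (i + 1) + 1 by omega, List.range_succ, List.map_append,
    List.prod_append]
  simp [Nat.sub_sub_self h]

lemma smul_mul_sum_Wch_mul_transpose (γ : ℕ → ℝ) (n : ℕ) :
    γ (n + 1) • (W (n + 1) *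
      ∑ i ∈ Icc 2 (n + 1), (1 / γ (i - 1)) • (Wch W i n * (Wch W i (n + 1))ᵀ)) =
    ∑ i ∈ Icc 2 (n + 1), (γ (n + 1) / γ (i - 1)) • (Wch W i (n + 1) * (Wch W i (n + 1))ᵀ) := by
  rw [mul_sum, smul_sum]
  refine sum_congr rfl fun i hi => ?_
  rw [mul_smul_comm, smul_smul, ← mul_assoc, ← Wch_succ_right W (mem_Icc.1 hi).2, mul_one_div]

end Wch

section Telescoping

variable {d : ℕ} (W : ℕ → Matrix (Fin d) (Fin d) ℝ) {v e : ℕ → Fin d → ℝ}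

theorem sub_Wch_mulVec_eq_sum (m : ℕ) (he : ∀ l, 1 ≤ l → l ≤ m → e l = v l - W l *ᵥ v (l - 1)) :
    v m - Wch W 1 m *ᵥ v 0 = ∑ l ∈ Icc 1 m, Wch W (l + 1) m *ᵥ e l := by
  induction m with
  | zero => simp [Wch_eq_one_of_lt]
  | succ m ih =>
    have hchain : ∀ l ∈ Icc 1 m, Wch W (l + 1) (m + 1) *ᵥ e l
        = W (m + 1) *ᵥ (Wch W (l + 1) m *ᵥ e l) := fun l hl => by
      rw [Wch_succ_right W (by grind), mulVec_mulVec]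
    rw [sum_Icc_succ_top (by omega), sum_congr rfl hchain, ← mulVec_sum,
      ← ih fun l h1 h2 => he l h1 (by omega), Wch_eq_one_of_lt W (i := m + 1 + 1) (by omega),
      one_mulVec, he (m + 1) (by omega) le_rfl, Nat.add_sub_cancel,
      Wch_succ_right W (i := 1) (j := m) (by omega), mulVec_sub, ← mulVec_mulVec]
    abel

end Telescoping

section Backpropagation

variable {d : ℕ} (W : ℕ → Matrix (Fin d) (Fin d) ℝ) {γ : ℕ → ℝ} {e : ℕ → Fin d → ℝ} {n : ℕ}

theorem eq_smul_transpose_Wch_mulVec_top (hγ : ∀ l, 1 ≤ l → l ≤ n + 1 → γ l ≠ 0)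
    (hcrit : ∀ l, 1 ≤ l → l ≤ n → γ l • e l = γ (l + 1) • ((W (l + 1))ᵀ *ᵥ e (l + 1)))
    {l : ℕ} (hl : 1 ≤ l) (hln : l ≤ n + 1) :
    e l = (γ (n + 1) / γ l) • ((Wch W (l + 1) (n + 1))ᵀ *ᵥ e (n + 1)) := by
  induction hln using Nat.decreasingInduction with
  | self => simp [Wch_eq_one_of_lt, hγ (n + 1) hl le_rfl]
  | of_succ k hk ih =>
    have hk0 : γ k ≠ 0 := hγ k hl hk.le
    have hk1 : γ (k + 1) ≠ 0 := hγ (k + 1) (by omega) hk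
    have h := hcrit k hl (by omega)
    rw [ih (by omega), mulVec_smul, mulVec_mulVec, ← transpose_mul,
      ← Wch_eq_Wch_succ_left_mul W (by omega), smul_smul] at h
    rw [← inv_smul_smul₀ hk0 (e k), h, smul_smul]
    congr 1
    field_simp

theorem sum_Wch_mulVec_eq_smul_mulVec_top (hγ : ∀ l, 1 ≤ l → l ≤ n + 1 → γ l ≠ 0)
    (hcrit : ∀ l, 1 ≤ l → l ≤ n → γ l • e l = γ (l + 1) • ((W (l + 1))ᵀ *ᵥ e (l + 1))) :
    ∑ l ∈ Icc 1 n, Wch W (l + 1) n *ᵥ e l =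
      γ (n + 1) • ((∑ i ∈ Icc 2 (n + 1), (1 / γ (i - 1)) • (Wch W i n * (Wch W i (n + 1))ᵀ))
        *ᵥ e (n + 1)) := by
  rw [sum_mulVec, smul_sum, ← map_add_right_Icc 1 n 1, sum_map]
  refine sum_congr rfl fun l hl => ?_
  rw [mem_Icc] at hl
  rw [eq_smul_transpose_Wch_mulVec_top W hγ hcrit hl.1 (by omega), mulVec_smul, mulVec_mulVec,
    addRightEmbedding_apply, Nat.add_sub_cancel, smul_mulVec, smul_smul, mul_one_div]

end Backpropagation

/-- **Self-consistency of the last-layer error.** Combining the critical-point relations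
`γ_l e_l = γ_{l+1} W_{l+1}ᵀ e_{l+1}` with the telescoping
`v_{L-1} - W_{L-1:1} x = ∑_{l=1}^{L-1} W_{L-1:l+1} e_l`, one obtains
`v_{L-1} - W_{L-1:1} x = γ_L (∑_{i=2}^{L} (1/γ_{i-1}) W_{L-1:i} W_{L:i}ᵀ) e_L`, and hence
`(I + C_γ) e_L = y - W_{L:1} x`. -/
theorem pc_last_layer_self_consistency (d L : ℕ) (hL : 2 ≤ L)
    (W : ℕ → Matrix (Fin d) (Fin d) ℝ) (γ : ℕ → ℝ) (hγ : ∀ l, 1 ≤ l → l ≤ L → 0 < γ l)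
    (x y : Fin d → ℝ) (v : ℕ → Fin d → ℝ) (hv0 : v 0 = x)
    (e : ℕ → Fin d → ℝ)
    (he : ∀ l, 1 ≤ l → l ≤ L - 1 → e l = v l - W l *ᵥ v (l - 1))
    (heL : e L = y - W L *ᵥ v (L - 1))
    (hcrit : ∀ l, 1 ≤ l → l ≤ L - 1 →
      γ l • e l = γ (l + 1) • ((W (l + 1))ᵀ *ᵥ e (l + 1)))
    (C : Matrix (Fin d) (Fin d) ℝ)
    (hC : C = ∑ i ∈ Finset.Icc 2 L, (γ L / γ (i - 1)) • (Wch W i L * (Wch W i L)ᵀ)) :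
    v (L - 1) - Wch W 1 (L - 1) *ᵥ x =
      ∑ l ∈ Finset.Icc 1 (L - 1), Wch W (l + 1) (L - 1) *ᵥ e l ∧
    v (L - 1) - Wch W 1 (L - 1) *ᵥ x =
      γ L • ((∑ i ∈ Finset.Icc 2 L, (1 / γ (i - 1)) • (Wch W i (L - 1) * (Wch W i L)ᵀ))
        *ᵥ e L) ∧
    ((1 : Matrix (Fin d) (Fin d) ℝ) + C) *ᵥ e L = y - Wch W 1 L *ᵥ x := by
  obtain ⟨n, rfl⟩ : ∃ n, L = n + 1 := ⟨L - 1, by omega⟩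
  simp only [Nat.add_sub_cancel] at he heL hcrit ⊢
  have htel := hv0 ▸ sub_Wch_mulVec_eq_sum W n he
  have hsum := sum_Wch_mulVec_eq_smul_mulVec_top W (fun l h1 h2 => (hγ l h1 h2).ne') hcrit
  set S := ∑ i ∈ Icc 2 (n + 1), (1 / γ (i - 1)) • (Wch W i n * (Wch W i (n + 1))ᵀ)
  have hCS : C = γ (n + 1) • (W (n + 1) * S) := hC.trans (smul_mul_sum_Wch_mul_transpose W γ n).symm
  refine ⟨htel, htel.trans hsum, ?_⟩
  have hv : v n = Wch W 1 n *ᵥ x + γ (n + 1) • (S *ᵥ e (n + 1)) := by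
    rw [← htel.trans hsum, add_sub_cancel]
  have heL' :
      e (n + 1) = y - Wch W 1 (n + 1) *ᵥ x - γ (n + 1) • (W (n + 1) *ᵥ S *ᵥ e (n + 1)) := by
    nth_rewrite 1 [heL]
    rw [hv, mulVec_add, mulVec_mulVec, ← Wch_succ_right W (by omega), mulVec_smul,
      sub_add_eq_sub_sub]
  rw [add_mulVec, one_mulVec, hCS, smul_mulVec, ← mulVec_mulVec]
  exact eq_sub_iff_add_eq.mp heL'
end

section
/- (Nudged PC reduces the damping continuously) For the nudged PC fixed point with nudge coefficient $\beta > 0$, the last-layer mismatch $\chi^* = y - v_L^*$ satisfies $\chi^* = \left(I + \frac{\beta}{\gamma_L}(I + C_\gamma)\right)^{-1}(y - W_{L:1}x)$, and $\lim_{\beta\to\infty}\left(I + \frac{\gamma_L}{\beta}I + C_\gamma\right)^{-1} = (I + C_\gamma)^{-1}$, so the nudged PC layer errors $e_l^*(\beta) = \frac{\gamma_L}{\gamma_l}W_{L:l+1}^\top(I + \frac{\gamma_L}{\beta}I + C_\gamma)^{-1}(y - W_{L:1}x)$ converge to the naive PC layer errors as $\beta \to \infty$. -/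
open Matrix Finset Filter

lemma Wch_of_lt {d : ℕ} (W : ℕ → Matrix (Fin d) (Fin d) ℝ) {i j : ℕ} (h : j < i) :
    Wch W i j = 1 := by
  simp [Wch, Nat.sub_eq_zero_of_le h]

lemma Wch_succ {d : ℕ} (W : ℕ → Matrix (Fin d) (Fin d) ℝ) {i j : ℕ} (h : i ≤ j + 1) :
    Wch W i (j + 1) = W (j + 1) * Wch W i j := by
  unfold Wch
  rw [show j + 1 + 1 - i = (j + 1 - i) + 1 by omega, List.range_succ_eq_map]
  simp [List.map_map, Function.comp_def, Nat.succ_sub_succ]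

lemma Wch_peel {d : ℕ} (W : ℕ → Matrix (Fin d) (Fin d) ℝ) {i j : ℕ} (h : i ≤ j) :
    Wch W i j = Wch W (i + 1) j * W i := by
  unfold Wch
  rw [show j + 1 - i = (j - i) + 1 by omega, List.range_succ]
  simp [show j - (j - i) = i by omega, show j + 1 - (i+1) = j - i by omega]

lemma sum_mulVec' {d : ℕ} (s : Finset ℕ) (f : ℕ → Matrix (Fin d) (Fin d) ℝ)
    (x : Fin d → ℝ) : (∑ i ∈ s, f i) *ᵥ x = ∑ i ∈ s, f i *ᵥ x := by
  induction s using Finset.cons_induction with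
  | empty => simp
  | cons a s ha ih => simp [Finset.sum_insert ha, Matrix.add_mulVec, ih]

lemma psd_smul {d : ℕ} {A : Matrix (Fin d) (Fin d) ℝ} (hA : A.PosSemidef) {c : ℝ}
    (hc : 0 ≤ c) : (c • A).PosSemidef := by
  refine ⟨?_, fun x => ?_⟩
  · unfold Matrix.IsHermitian
    rw [conjTranspose_smul, hA.1]
    simp
  · exact (hA.smul hc).2 x

/-- **Nudged PC reduces the damping continuously.** At the nudged PC fixed point with nudge
`β > 0`, the last-layer mismatch satisfies
`y - v_L = (I + (β/γ_L)(I + C_γ))⁻¹ (y - W_{L:1}x)`; moreover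
`lim_{β→∞} (I + (γ_L/β) I + C_γ)⁻¹ = (I + C_γ)⁻¹`, so the nudged PC layer errors
`e_l(β) = (γ_L/γ_l) W_{L:l+1}ᵀ (I + (γ_L/β) I + C_γ)⁻¹ (y - W_{L:1}x)` converge to the naive
PC layer errors as `β → ∞`. -/
theorem nudged_pc_damping_limit (d L : ℕ) (hL : 2 ≤ L)
    (W : ℕ → Matrix (Fin d) (Fin d) ℝ)
    (β : ℝ) (hβ : 0 < β)
    (γ : ℕ → ℝ) (hγ : ∀ l, 1 ≤ l → l ≤ L → 0 < γ l)
    (x y : Fin d → ℝ) (v : ℕ → Fin d → ℝ) (hv0 : v 0 = x)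
    (e : ℕ → Fin d → ℝ)
    (he : ∀ l, 1 ≤ l → l ≤ L → e l = v l - W l *ᵥ v (l - 1))
    (hcritL : β • (v L - y) + γ L • e L = 0)
    (hcrit : ∀ l, 1 ≤ l → l ≤ L - 1 →
      γ l • e l = γ (l + 1) • ((W (l + 1))ᵀ *ᵥ e (l + 1)))
    (C : Matrix (Fin d) (Fin d) ℝ)
    (hC : C = ∑ i ∈ Finset.Icc 2 L, (γ L / γ (i - 1)) • (Wch W i L * (Wch W i L)ᵀ)) :
    y - v L =
      ((1 : Matrix (Fin d) (Fin d) ℝ) + (β / γ L) • ((1 : Matrix (Fin d) (Fin d) ℝ) + C))⁻¹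
        *ᵥ (y - Wch W 1 L *ᵥ x) ∧
    Tendsto
      (fun b : ℝ =>
        ((1 : Matrix (Fin d) (Fin d) ℝ) + (γ L / b) • (1 : Matrix (Fin d) (Fin d) ℝ) + C)⁻¹)
      atTop (nhds (((1 : Matrix (Fin d) (Fin d) ℝ) + C)⁻¹)) ∧
    ∀ l, 1 ≤ l → l ≤ L - 1 →
      Tendsto
        (fun b : ℝ => (γ L / γ l) • ((Wch W (l + 1) L)ᵀ *ᵥ
          (((1 : Matrix (Fin d) (Fin d) ℝ) + (γ L / b) • (1 : Matrix (Fin d) (Fin d) ℝ) + C)⁻¹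
            *ᵥ (y - Wch W 1 L *ᵥ x))))
        atTop
        (nhds ((γ L / γ l) • ((Wch W (l + 1) L)ᵀ *ᵥ
          (((1 : Matrix (Fin d) (Fin d) ℝ) + C)⁻¹ *ᵥ (y - Wch W 1 L *ᵥ x))))) := by
  have hγL : 0 < γ L := hγ L (by omega) le_rfl
  -- C is positive semidefinite
  have hCpsd : C.PosSemidef := by
    rw [hC]
    refine Finset.sum_induction _ _ (fun a b ha hb => ha.add hb) (Matrix.PosSemidef.zero)
      fun i hi => ?_
    have hi' := Finset.mem_Icc.mp hi
    have hγi : 0 < γ (i - 1) := hγ (i - 1) (by omega) (by omega)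
    refine psd_smul ?_ (by positivity)
    have := Matrix.posSemidef_self_mul_conjTranspose (Wch W i L)
    rwa [Matrix.conjTranspose_eq_transpose_of_trivial] at this
  -- e L in terms of χ = y - v L
  have heL : e L = (β / γ L) • (y - v L) := by
    have h1 : γ L • e L = β • (y - v L) := by
      have := hcritL
      have h2 : β • (v L - y) = -(β • (y - v L)) := by
        rw [← smul_neg, neg_sub]
      rw [h2] at this
      linear_combination (norm := module) this
    calc e L = (γ L)⁻¹ • (γ L • e L) := by rw [smul_smul, inv_mul_cancel₀ hγL.ne', one_smul]
      _ = (β / γ L) • (y - v L) := by rw [h1, smul_smul, div_eq_inv_mul]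
  -- downward recursion for e l
  have hrec : ∀ l, 1 ≤ l → l ≤ L → e l = (γ L / γ l) • ((Wch W (l + 1) L)ᵀ *ᵥ e L) := by
    have key : ∀ k, k ≤ L - 1 → e (L - k) = (γ L / γ (L - k)) • ((Wch W (L - k + 1) L)ᵀ *ᵥ e L) := by
      intro k
      induction k with
      | zero =>
        intro _
        simp [Wch_of_lt W (Nat.lt_succ_self L), div_self hγL.ne', Matrix.one_mulVec]
      | succ k ih =>
        intro hk
        have hk' : k ≤ L - 1 := by omega
        set l := L - (k + 1) with hl
        have hl1 : 1 ≤ l := by omega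
        have hl2 : l ≤ L - 1 := by omega
        have hll : l + 1 = L - k := by omega
        have hγl : 0 < γ l := hγ l hl1 (by omega)
        have h1 := hcrit l hl1 hl2
        have h2 : e (l + 1) = (γ L / γ (l + 1)) • ((Wch W (l + 1 + 1) L)ᵀ *ᵥ e L) := by
          rw [hll]; exact ih hk'
        have hγl1 : 0 < γ (l + 1) := hγ (l + 1) (by omega) (by omega)
        rw [h2] at h1
        have h3 : γ l • e l = γ L • ((Wch W (l + 1) L)ᵀ *ᵥ e L) := by
          rw [h1, Matrix.mulVec_smul, smul_smul, mul_div_cancel₀ _ hγl1.ne',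
            Wch_peel W (show l + 1 ≤ L by omega), Matrix.transpose_mul, ← Matrix.mulVec_mulVec]
        calc e l = (γ l)⁻¹ • (γ l • e l) := by
              rw [smul_smul, inv_mul_cancel₀ hγl.ne', one_smul]
          _ = (γ L / γ l) • ((Wch W (l + 1) L)ᵀ *ᵥ e L) := by
              rw [h3, smul_smul, inv_mul_eq_div]
    intro l h1 h2
    have := key (L - l) (by omega)
    rwa [show L - (L - l) = l by omega] at this
  -- unrolled forward pass
  have hfwd : ∀ n, n ≤ L → v n = Wch W 1 n *ᵥ x + ∑ l ∈ Icc 1 n, Wch W (l + 1) n *ᵥ e l := by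
    intro n
    induction n with
    | zero => intro _; simp [hv0, Wch_of_lt W (show (0:ℕ) < 1 by norm_num), Matrix.one_mulVec]
    | succ n ih =>
      intro hn
      have hvn := ih (by omega)
      have hen := he (n + 1) (by omega) hn
      have hv : v (n + 1) = W (n + 1) *ᵥ v n + e (n + 1) := by
        rw [hen]; simp
      rw [hv, hvn, Matrix.mulVec_add, Matrix.mulVec_mulVec, ← Wch_succ W (by omega)]
      rw [Finset.sum_Icc_succ_top (by omega : 1 ≤ n + 1)]
      rw [Wch_of_lt W (Nat.lt_succ_self (n + 1)), Matrix.one_mulVec]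
      have hsum : W (n + 1) *ᵥ ∑ l ∈ Icc 1 n, Wch W (l + 1) n *ᵥ e l
          = ∑ l ∈ Icc 1 n, Wch W (l + 1) (n + 1) *ᵥ e l := by
        rw [← Matrix.mulVecLin_apply, map_sum]
        refine Finset.sum_congr rfl fun l hl => ?_
        have hl' := (Finset.mem_Icc.mp hl).2
        rw [Matrix.mulVecLin_apply, Matrix.mulVec_mulVec, ← Wch_succ W (by omega)]
      rw [hsum]
      abel
  -- the key linear identity
  set M : Matrix (Fin d) (Fin d) ℝ :=
    (1 : Matrix (Fin d) (Fin d) ℝ) + (β / γ L) • ((1 : Matrix (Fin d) (Fin d) ℝ) + C) with hM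
  have hvL := hfwd L le_rfl
  have hLmem : L ∈ Icc 1 L := by simp; omega
  have herase : (Icc 1 L).erase L = Icc 1 (L - 1) := by
    ext a; simp only [Finset.mem_erase, Finset.mem_Icc]; omega
  have hsplit : ∑ l ∈ Icc 1 L, Wch W (l + 1) L *ᵥ e l = e L + C *ᵥ e L := by
    rw [← Finset.add_sum_erase _ _ hLmem, Wch_of_lt W (Nat.lt_succ_self L),
      Matrix.one_mulVec, herase]
    congr 1
    have hterm : ∀ l ∈ Icc 1 (L - 1),
        Wch W (l + 1) L *ᵥ e l
          = ((γ L / γ l) • (Wch W (l + 1) L * (Wch W (l + 1) L)ᵀ)) *ᵥ e L := by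
      intro l hl
      have hl' := Finset.mem_Icc.mp hl
      rw [hrec l hl'.1 (by omega), Matrix.mulVec_smul, Matrix.mulVec_mulVec,
        Matrix.smul_mulVec]
    rw [Finset.sum_congr rfl hterm, ← sum_mulVec', hC]
    have hmap : Finset.Icc 2 L = (Finset.Icc 1 (L - 1)).map (addRightEmbedding 1) := by
      rw [Finset.map_add_right_Icc]
      congr 1
      omega
    rw [hmap, Finset.sum_map]
    simp [addRightEmbedding_apply]
  have hmain : M *ᵥ (y - v L) = y - Wch W 1 L *ᵥ x := by
    have hvL' : v L = Wch W 1 L *ᵥ x + (e L + C *ᵥ e L) := by rw [hvL, hsplit]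
    have hyw : y - Wch W 1 L *ᵥ x = (y - v L) + (e L + C *ᵥ e L) := by
      rw [hvL']; abel
    rw [hyw, heL, Matrix.mulVec_smul]
    rw [hM, Matrix.add_mulVec, Matrix.one_mulVec, Matrix.smul_mulVec,
      Matrix.add_mulVec, Matrix.one_mulVec]
    module
  -- M is positive definite, hence invertible
  have h1Cpd : ((1 : Matrix (Fin d) (Fin d) ℝ) + C).PosDef :=
    Matrix.PosDef.add_posSemidef Matrix.PosDef.one hCpsd
  have hMpd : M.PosDef :=
    Matrix.PosDef.add_posSemidef Matrix.PosDef.one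
      (psd_smul h1Cpd.posSemidef (by positivity))
  have hMdet : IsUnit M.det := isUnit_iff_ne_zero.mpr hMpd.det_pos.ne'
  have part1 : y - v L = M⁻¹ *ᵥ (y - Wch W 1 L *ᵥ x) := by
    have h := congrArg (fun w => M⁻¹ *ᵥ w) hmain
    simpa [Matrix.mulVec_mulVec, Matrix.nonsing_inv_mul M hMdet,
      Matrix.one_mulVec] using h
  -- the limit of the inverses
  have hdetne : ((1 : Matrix (Fin d) (Fin d) ℝ) + C).det ≠ 0 := h1Cpd.det_pos.ne'
  have hcontinv : ContinuousAt Inv.inv ((1 : Matrix (Fin d) (Fin d) ℝ) + C) := by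
    refine continuousAt_matrix_inv _ ?_
    rw [Ring.inverse_eq_inv']
    exact continuousAt_inv₀ hdetne
  have htend0 : Tendsto (fun b : ℝ => γ L / b) atTop (nhds 0) := by
    simpa [div_eq_mul_inv] using tendsto_inv_atTop_zero.const_mul (γ L)
  have htendM : Tendsto
      (fun b : ℝ =>
        (1 : Matrix (Fin d) (Fin d) ℝ) + (γ L / b) • (1 : Matrix (Fin d) (Fin d) ℝ) + C)
      atTop (nhds ((1 : Matrix (Fin d) (Fin d) ℝ) + C)) := by
    have h1 : Tendsto (fun b : ℝ => (γ L / b) • (1 : Matrix (Fin d) (Fin d) ℝ)) atTop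
        (nhds (0 : Matrix (Fin d) (Fin d) ℝ)) := by
      simpa using htend0.smul_const (1 : Matrix (Fin d) (Fin d) ℝ)
    have := ((tendsto_const_nhds :
        Tendsto (fun _ : ℝ => (1 : Matrix (Fin d) (Fin d) ℝ)) atTop (nhds 1)).add h1).add
      (tendsto_const_nhds : Tendsto (fun _ : ℝ => C) atTop (nhds C))
    simpa using this
  have part2 : Tendsto
      (fun b : ℝ =>
        ((1 : Matrix (Fin d) (Fin d) ℝ) + (γ L / b) • (1 : Matrix (Fin d) (Fin d) ℝ) + C)⁻¹)
      atTop (nhds (((1 : Matrix (Fin d) (Fin d) ℝ) + C)⁻¹)) :=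
    hcontinv.tendsto.comp htendM
  refine ⟨part1, part2, ?_⟩
  intro l hl1 hl2
  have hcontF : Continuous (fun A : Matrix (Fin d) (Fin d) ℝ =>
      (γ L / γ l) • ((Wch W (l + 1) L)ᵀ *ᵥ (A *ᵥ (y - Wch W 1 L *ᵥ x)))) :=
    ((continuous_const.matrix_mulVec
      (continuous_id.matrix_mulVec continuous_const)).const_smul (γ L / γ l))
  exact (hcontF.tendsto _).comp part2
end
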